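/- (Proposition 1) Let Γ be a finite nonempty set, Δ : Γ → Γ → ℤ a matrix with det Δ ≠ 0, ∂Γ ⊆ Γ and Γ° = Γ \ ∂Γ. Let Δ̃ : ℤ^Γ → ℤ^{Γ°} × ℝ^{∂Γ} be the homomorphism sending f to ((Δf)|_{Γ°}, (Δf)|_{∂Γ} viewed as a real-valued function). Then the extended sandpile group G̃(Γ) := (ℤ^{Γ°} × ℝ^{∂Γ}) / Δ̃(ℤ^Γ) is isomorphic as an abelian group to the group H_{ℝ/ℤ}(Γ) = ker(Δ°⊗(ℝ/ℤ)) of circle-valued harmonic functions on Γ. -/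
import Mathlib


open scoped BigOperators

/-- `Δ° ⊗ A : A^Γ → A^{Γ°}`: the Laplacian followed by restriction to the
interior `Γ° = Γ \ ∂Γ` (here `B` is the boundary `∂Γ`). -/
def lapIntHom {Γ : Type} [Fintype Γ] (Δ : Matrix Γ Γ ℤ) (B : Set Γ)
    (A : Type) [AddCommGroup A] : (Γ → A) →+ ({v : Γ // v ∉ B} → A) where
  toFun f v := ∑ w, Δ v.1 w • f w
  map_zero' := by funext v; simp
  map_add' f g := by funext v; simp [smul_add, Finset.sum_add_distrib]

/-- `Δ̃ : ℤ^Γ → ℤ^{Γ°} × ℝ^{∂Γ}`, sending `f` to `Δf` restricted to the interior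
(integer-valued) together with `Δf` restricted to the boundary, viewed as real-valued. -/
def extLap {Γ : Type} [Fintype Γ] (Δ : Matrix Γ Γ ℤ) (B : Set Γ) :
    (Γ → ℤ) →+ (({v : Γ // v ∉ B} → ℤ) × ({v : Γ // v ∈ B} → ℝ)) where
  toFun f := (fun v => ∑ w, Δ v.1 w * f w, fun v => ∑ w, (Δ v.1 w : ℝ) * (f w : ℝ))
  map_zero' := by
    refine Prod.ext ?_ ?_ <;> funext v <;> simp
  map_add' f g := by
    refine Prod.ext ?_ ?_ <;> funext v <;>
      simp [mul_add, Finset.sum_add_distrib]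
  /- the second component: `push_cast` handled by simp lemmas -/

section Aux

variable {Γ : Type}

/-- The projection `ℝ →+ ℝ/ℤ`. -/
noncomputable def circProj : ℝ →+ AddCircle (1 : ℝ) :=
  QuotientAddGroup.mk' _

lemma circProj_apply (x : ℝ) : circProj x = (x : AddCircle (1 : ℝ)) := rfl

lemma circProj_intCast (n : ℤ) : circProj ((n : ℝ)) = 0 := by
  rw [circProj, QuotientAddGroup.mk'_apply, QuotientAddGroup.eq_zero_iff]
  exact ⟨n, by simp⟩

lemma circProj_eq_zero_iff (x : ℝ) : circProj x = 0 ↔ ∃ n : ℤ, x = (n : ℝ) := by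
  rw [circProj, QuotientAddGroup.mk'_apply, QuotientAddGroup.eq_zero_iff,
    AddSubgroup.mem_zmultiples_iff]
  constructor
  · rintro ⟨k, hk⟩; exact ⟨k, by simpa using hk.symm⟩
  · rintro ⟨n, hn⟩; exact ⟨n, by simp [hn]⟩

/-- Glue an integer-valued function on the interior and a real-valued function on the
boundary into a real-valued function on `Γ`. -/
noncomputable def glue (B : Set Γ) :
    (({v : Γ // v ∉ B} → ℤ) × ({v : Γ // v ∈ B} → ℝ)) →+ (Γ → ℝ) :=
  AddMonoidHom.mk' (fun p v => @dite _ (v ∈ B) (Classical.dec _)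
      (fun h => p.2 ⟨v, h⟩) (fun h => ((p.1 ⟨v, h⟩ : ℤ) : ℝ)))
    (by
      intro p q
      funext v
      by_cases h : v ∈ B
      · simp only [dif_pos h, Prod.snd_add, Pi.add_apply]
      · simp only [dif_neg h, Prod.fst_add, Pi.add_apply, Int.cast_add])

lemma glue_mem (B : Set Γ) (p) (v : Γ) (h : v ∈ B) : glue B p v = p.2 ⟨v, h⟩ := by
  simp [glue, AddMonoidHom.mk'_apply, h]

lemma glue_not_mem (B : Set Γ) (p) (v : Γ) (h : v ∉ B) :
    glue B p v = ((p.1 ⟨v, h⟩ : ℤ) : ℝ) := by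
  simp only [glue, AddMonoidHom.mk'_apply, dif_neg h]

end Aux
open scoped Matrix

lemma circProj_mulVec {Γ : Type} [Fintype Γ] (Δ : Matrix Γ Γ ℤ) (x : Γ → ℝ) (v : Γ) :
    circProj ((Δ.map (Int.cast : ℤ → ℝ) *ᵥ x) v) = ∑ w, Δ v w • circProj (x w) := by
  simp only [Matrix.mulVec, dotProduct, Matrix.map_apply]
  rw [map_sum]
  exact Finset.sum_congr rfl fun w _ => by rw [← zsmul_eq_mul, map_zsmul]

theorem extended_sandpile_group_iso_circle_harmonic
    (Γ : Type) [Fintype Γ] [DecidableEq Γ] [Nonempty Γ]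
    (Δ : Matrix Γ Γ ℤ) (B : Set Γ) (hΔ : Δ.det ≠ 0) :
    Nonempty (((({v : Γ // v ∉ B} → ℤ) × ({v : Γ // v ∈ B} → ℝ)) ⧸ (extLap Δ B).range)
      ≃+ (lapIntHom Δ B (AddCircle (1 : ℝ))).ker) := by
  classical
  set Δℝ : Matrix Γ Γ ℝ := Δ.map (Int.cast : ℤ → ℝ) with hΔℝdef
  have hdet : IsUnit Δℝ.det := by
    rw [isUnit_iff_ne_zero, hΔℝdef,
      show Δ.map (Int.cast : ℤ → ℝ) = (Int.castRingHom ℝ).mapMatrix Δ from rfl,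
      ← RingHom.map_det]
    simpa using hΔ
  -- the main homomorphism
  set Φ : (({v : Γ // v ∉ B} → ℤ) × ({v : Γ // v ∈ B} → ℝ)) →+ (Γ → AddCircle (1 : ℝ)) :=
    ((circProj.compLeft Γ).comp (Δℝ⁻¹.mulVecLin).toAddMonoidHom).comp (glue B) with hΦdef
  have hΦ : ∀ p v, Φ p v = circProj ((Δℝ⁻¹ *ᵥ glue B p) v) := fun p v => rfl
  have hround : ∀ p, Δℝ *ᵥ (Δℝ⁻¹ *ᵥ glue B p) = glue B p := by
    intro p
    rw [Matrix.mulVec_mulVec, Matrix.mul_nonsing_inv _ hdet, Matrix.one_mulVec]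
  -- Φ lands in the group of harmonic functions
  have hmem : ∀ p, Φ p ∈ (lapIntHom Δ B (AddCircle (1 : ℝ))).ker := by
    intro p
    rw [AddMonoidHom.mem_ker]
    funext v
    show ∑ w, Δ v.1 w • Φ p w = 0
    have := circProj_mulVec Δ (Δℝ⁻¹ *ᵥ glue B p) v.1
    rw [← hΔℝdef, hround p] at this
    rw [show (∑ w, Δ v.1 w • Φ p w) = ∑ w, Δ v.1 w • circProj ((Δℝ⁻¹ *ᵥ glue B p) w)
        from rfl, ← this, glue_not_mem B p v.1 v.2, circProj_intCast]
  set Ψ := Φ.codRestrict _ hmem with hΨdef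
  -- kernel of Ψ is the range of the extended Laplacian
  have hker : Ψ.ker = (extLap Δ B).range := by
    rw [hΨdef, AddMonoidHom.ker_codRestrict]
    ext p
    simp only [AddMonoidHom.mem_ker, AddMonoidHom.mem_range]
    constructor
    · intro hp
      have hz : ∀ v, ∃ n : ℤ, (Δℝ⁻¹ *ᵥ glue B p) v = (n : ℝ) := by
        intro v
        rw [← circProj_eq_zero_iff, ← hΦ p v, hp]
        rfl
      choose f hf using hz
      have hglue : glue B p = Δℝ *ᵥ (fun v => (f v : ℝ)) := by
        have hx : (Δℝ⁻¹ *ᵥ glue B p) = fun v => ((f v : ℤ) : ℝ) := funext hf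
        rw [← hround p, hx]
      refine ⟨f, ?_⟩
      have hval : ∀ v : Γ, glue B p v = ∑ w, (Δ v w : ℝ) * (f w : ℝ) := by
        intro v
        rw [hglue]
        simp [Matrix.mulVec, dotProduct, hΔℝdef]
      refine Prod.ext ?_ ?_
      · funext v
        show (∑ w, Δ v.1 w * f w) = p.1 v
        have := hval v.1
        rw [glue_not_mem B p v.1 v.2] at this
        exact_mod_cast this.symm
      · funext v
        show (∑ w, (Δ v.1 w : ℝ) * (f w : ℝ)) = p.2 v
        have := hval v.1
        rw [glue_mem B p v.1 v.2] at this
        exact this.symm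
    · rintro ⟨f, rfl⟩
      have hglue : glue B (extLap Δ B f) = Δℝ *ᵥ (fun v => (f v : ℝ)) := by
        funext v
        by_cases h : v ∈ B
        · rw [glue_mem B _ v h]
          simp [extLap, Matrix.mulVec, dotProduct, hΔℝdef]
        · rw [glue_not_mem B _ v h]
          show ((∑ w, Δ v w * f w : ℤ) : ℝ) = _
          push_cast
          simp [Matrix.mulVec, dotProduct, hΔℝdef]
      funext v
      rw [hΦ, hglue, Matrix.mulVec_mulVec, Matrix.nonsing_inv_mul _ hdet,
        Matrix.one_mulVec]
      exact circProj_intCast (f v)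
  -- surjectivity of Ψ
  have hsurj : Function.Surjective Ψ := by
    rintro ⟨h, hh⟩
    have hlift : ∀ v, ∃ x : ℝ, circProj x = h v := fun v =>
      QuotientAddGroup.mk'_surjective _ (h v)
    choose ft hft using hlift
    set g : Γ → ℝ := Δℝ *ᵥ ft with hgdef
    have hint : ∀ v : Γ, v ∉ B → ∃ n : ℤ, g v = (n : ℝ) := by
      intro v hv
      rw [← circProj_eq_zero_iff, hgdef, hΔℝdef, circProj_mulVec]
      have : (lapIntHom Δ B (AddCircle (1 : ℝ))) h ⟨v, hv⟩ = 0 := by rw [hh]; rfl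
      rw [show ((lapIntHom Δ B (AddCircle (1 : ℝ))) h ⟨v, hv⟩) = ∑ w, Δ v w • h w from rfl]
        at this
      rw [← this]
      exact Finset.sum_congr rfl fun w _ => by rw [hft]
    choose a ha using fun v : {v : Γ // v ∉ B} => hint v.1 v.2
    set p : (({v : Γ // v ∉ B} → ℤ) × ({v : Γ // v ∈ B} → ℝ)) :=
      (a, fun v => g v.1) with hpdef
    have hpg : glue B p = g := by
      funext v
      by_cases hv : v ∈ B
      · rw [glue_mem B p v hv]
      · rw [glue_not_mem B p v hv]
        exact (ha ⟨v, hv⟩).symm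
    refine ⟨p, ?_⟩
    apply Subtype.ext
    show Φ p = h
    funext v
    rw [hΦ, hpg, hgdef, Matrix.mulVec_mulVec, Matrix.nonsing_inv_mul _ hdet,
      Matrix.one_mulVec]
    exact hft v
  exact ⟨(QuotientAddGroup.quotientAddEquivOfEq hker.symm).trans
    (QuotientAddGroup.quotientKerEquivOfSurjective Ψ hsurj)⟩
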